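/- Let n ≥ 1, define L : M_n(ℂ) → M_n(ℂ) by L(A)_{ij} = |i−j| a_{ij}, the gradient form Γ(A,B) = ( L(Aᴴ)B + Aᴴ L(B) − L(AᴴB) ) / 2, and the iterated gradient form Γ₂(A,B) = ( Γ(L(A),B) + Γ(A,L(B)) − L(Γ(A,B)) ) / 2. Then for every A ∈ M_n(ℂ), the matrix Γ₂(A,A) is positive semidefinite; i.e. the semigroup S_t = e^{−tL} satisfies the Γ₂ ≥ 0 condition. -/

import Mathlib

open scoped Matrix ComplexOrder

/-- The generator `L(A)_{ij} = |i-j| a_{ij}` of the Schur multiplier semigroup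
`S_t(A)_{ij} = e^{-t|i-j|} a_{ij}`. -/
noncomputable def schurGen (n : ℕ) (A : Matrix (Fin n) (Fin n) ℂ) :
    Matrix (Fin n) (Fin n) ℂ :=
  fun i j => ((|((i : ℕ) : ℝ) - ((j : ℕ) : ℝ)| : ℝ) : ℂ) * A i j

/-- The gradient form `Γ(A,B) = (L(Aᴴ)B + Aᴴ L(B) − L(AᴴB))/2`. -/
noncomputable def gradForm (n : ℕ) (A B : Matrix (Fin n) (Fin n) ℂ) :
    Matrix (Fin n) (Fin n) ℂ :=
  (2 : ℂ)⁻¹ • (schurGen n Aᴴ * B + Aᴴ * schurGen n B - schurGen n (Aᴴ * B))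

/-- The iterated gradient form `Γ₂(A,B) = (Γ(L(A),B) + Γ(A,L(B)) − L(Γ(A,B)))/2`. -/
noncomputable def gradForm₂ (n : ℕ) (A B : Matrix (Fin n) (Fin n) ℂ) :
    Matrix (Fin n) (Fin n) ℂ :=
  (2 : ℂ)⁻¹ •
    (gradForm n (schurGen n A) B + gradForm n A (schurGen n B) -
      schurGen n (gradForm n A B))


/-! Entrywise, `Γ₂(A,B)_{ij} = ∑_k (i|j)_k² conj(a_{ki}) b_{kj}`, where
`(i|j)_k = (|k-i| + |k-j| - |i-j|)/2` is the Gromov product based at `k`. On a line, `(i|j)_k`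
counts the unit intervals shared by the segments `[k,i]` and `[k,j]`, so each kernel `(i|j)_k`
is a Gram matrix. By the Schur product theorem `Γ₂(A,A)` is then a sum of Hadamard products of
positive semidefinite matrices. -/

open Matrix Finset

theorem Matrix.posSemidef_card_inter {ι α R : Type*} [Finite ι] [Fintype α] [DecidableEq α]
    [Ring R] [PartialOrder R] [StarRing R] [StarOrderedRing R] (s : ι → Finset α) :
    (of fun i j => ((s i ∩ s j).card : R)).PosSemidef := by
  convert posSemidef_conjTranspose_mul_self (of fun t i => if t ∈ s i then (1 : R) else 0)
  ext i j
  simp [mul_apply, apply_ite star, Finset.inter_comm]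

noncomputable def lineDist {n : ℕ} (i j : Fin n) : ℂ :=
  ((|((i : ℕ) : ℝ) - ((j : ℕ) : ℝ)| : ℝ) : ℂ)

lemma schurGen_apply (n : ℕ) (A : Matrix (Fin n) (Fin n) ℂ) (i j : Fin n) :
    schurGen n A i j = lineDist i j * A i j := rfl

lemma lineDist_comm {n : ℕ} (i j : Fin n) : lineDist i j = lineDist j i := by
  rw [lineDist, lineDist, abs_sub_comm]

lemma star_lineDist {n : ℕ} (i j : Fin n) : star (lineDist i j) = lineDist i j :=
  Complex.conj_ofReal _

lemma lineDist_eq_intCast {n : ℕ} (i j : Fin n) :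
    lineDist i j = (((|((i : ℕ) : ℤ) - ((j : ℕ) : ℤ)| : ℤ) : ℝ) : ℂ) := by
  rw [lineDist, Int.cast_abs]
  push_cast
  rfl

noncomputable def gromovProduct (n : ℕ) (k : Fin n) : Matrix (Fin n) (Fin n) ℂ :=
  of fun i j => (lineDist k i + lineDist k j - lineDist i j) / 2

lemma gromovProduct_eq_card_inter (n : ℕ) (k i j : Fin n) :
    gromovProduct n k i j
      = ((Ico (min k i) (max k i) ∩ Ico (min k j) (max k j)).card : ℂ) := by
  have two_mul_card : 2 * ((Ico (min k i) (max k i) ∩ Ico (min k j) (max k j)).card : ℤ)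
      = |((k : ℕ) : ℤ) - i| + |((k : ℕ) : ℤ) - j| - |((i : ℕ) : ℤ) - j| := by
    rw [Ico_inter_Ico, Fin.card_Ico]
    simp only [abs_eq_max_neg, Fin.coe_max, Fin.coe_min]
    omega
  rw [gromovProduct, of_apply, lineDist_eq_intCast, lineDist_eq_intCast, lineDist_eq_intCast,
    div_eq_iff two_ne_zero, mul_comm]
  exact_mod_cast two_mul_card.symm

lemma gromovProduct_posSemidef (n : ℕ) (k : Fin n) : (gromovProduct n k).PosSemidef := by
  convert posSemidef_card_inter (R := ℂ) fun i => Ico (min k i) (max k i)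
  ext i j
  exact gromovProduct_eq_card_inter n k i j

lemma gradForm_apply (n : ℕ) (A B : Matrix (Fin n) (Fin n) ℂ) (i j : Fin n) :
    gradForm n A B i j = ∑ k, gromovProduct n k i j * (star (A k i) * B k j) := by
  simp only [gradForm, schurGen_apply, Matrix.smul_apply, Matrix.sub_apply, Matrix.add_apply,
    mul_apply, conjTranspose_apply, smul_eq_mul, Finset.mul_sum, ← Finset.sum_add_distrib,
    ← Finset.sum_sub_distrib, gromovProduct, of_apply]
  refine Finset.sum_congr rfl fun k _ => ?_
  rw [lineDist_comm i k]
  ring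

lemma gradForm₂_apply (n : ℕ) (A B : Matrix (Fin n) (Fin n) ℂ) (i j : Fin n) :
    gradForm₂ n A B i j = ∑ k, gromovProduct n k i j ^ 2 * (star (A k i) * B k j) := by
  simp only [gradForm₂, Matrix.smul_apply, Matrix.sub_apply, Matrix.add_apply, smul_eq_mul,
    gradForm_apply, schurGen_apply, star_mul', star_lineDist, Finset.mul_sum,
    ← Finset.sum_add_distrib, ← Finset.sum_sub_distrib]
  refine Finset.sum_congr rfl fun k _ => ?_
  simp only [gromovProduct, of_apply]
  ring

lemma gradForm₂_eq_sum (n : ℕ) (A B : Matrix (Fin n) (Fin n) ℂ) :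
    gradForm₂ n A B
      = ∑ k, gromovProduct n k ⊙ gromovProduct n k ⊙ vecMulVec (star (A k)) (B k) := by
  ext i j
  simp [gradForm₂_apply, Matrix.sum_apply, vecMulVec_apply, sq]

theorem gradForm₂_posSemidef_general (n : ℕ) (A : Matrix (Fin n) (Fin n) ℂ) :
    (gradForm₂ n A A).PosSemidef := by
  rw [gradForm₂_eq_sum]
  refine posSemidef_sum _ fun k _ => ?_
  have hk := gromovProduct_posSemidef n k
  exact (hk.hadamard hk).hadamard (posSemidef_vecMulVec_star_self _)

/-- Bakry's `Γ₂ ≥ 0` condition for the semigroup `S_t = e^{-tL}`: for every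
`A ∈ M_n(ℂ)`, the matrix `Γ₂(A,A)` is positive semidefinite. -/
theorem gradForm₂_posSemidef (n : ℕ) (hn : 1 ≤ n) (A : Matrix (Fin n) (Fin n) ℂ) :
    (gradForm₂ n A A).PosSemidef :=
  gradForm₂_posSemidef_general n A
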